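/- Two vertices in the same clique correspond to at most a 2^{−2J} fraction of pairs: for a fixed question U with dim(F_2^U) = 3J and dim(H_U) = J, and for uniformly random 2ℓ-dimensional L_i, L_j ⊆ F_2^U, the probability that L_i + H_U = L_j + H_U holds for any fixed L_j when L_i is uniform is at most [J+2ℓ choose 2ℓ]_2 / [3J choose 2ℓ]_2 ≤ 2^{−2J}, provided 2ℓ ≤ J. -/

import Mathlib

open Module Submodule Finset

section CountAux

variable (K : Type*) [Field K] [Fintype K]
variable (V : Type*) [AddCommGroup V] [Module K V] [Finite V]

lemma my_card_V : Nat.card V = Fintype.card K ^ Module.finrank K V := by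
  have : Fintype V := Fintype.ofFinite V
  rw [Nat.card_eq_fintype_card, card_eq_pow_finrank (K := K)]

lemma card_li (k : ℕ) :
    Nat.card {v : Fin k → V // LinearIndependent K v} =
      ∏ i ∈ Finset.range k, (Nat.card V - Fintype.card K ^ i) := by
  have : Fintype V := Fintype.ofFinite V
  classical
  induction k with
  | zero =>
      rw [Finset.range_zero, Finset.prod_empty]
      rw [Nat.card_eq_one_iff_unique.mpr]
      constructor
      · exact ⟨fun a b => Subtype.ext (funext fun i => i.elim0)⟩
      · exact ⟨⟨fun i => i.elim0, linearIndependent_empty_type⟩⟩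
  | succ k ih =>
      have e : {v : Fin (k+1) → V // LinearIndependent K v} ≃
          Σ w : Fin k → V, {x : V // LinearIndependent K w ∧
            x ∉ Submodule.span K (Set.range w)} :=
        (((Fin.consEquiv fun _ : Fin (k+1) => V).symm.subtypeEquiv (fun v => by
            rw [linearIndependent_fin_succ]; exact Iff.rfl)).trans
          ((Equiv.prodComm V (Fin k → V)).subtypeEquiv (fun p => Iff.rfl))).trans
          (Equiv.subtypeProdEquivSigmaSubtype fun (w : Fin k → V) (x : V) =>
              LinearIndependent K w ∧ x ∉ Submodule.span K (Set.range w))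
      rw [Nat.card_congr e, Nat.card_eq_fintype_card, Fintype.card_sigma,
        Finset.prod_range_succ, ← ih]
      have hfib : ∀ w : Fin k → V, Fintype.card {x : V // LinearIndependent K w ∧
            x ∉ Submodule.span K (Set.range w)} =
          if LinearIndependent K w then Nat.card V - Fintype.card K ^ k else 0 := by
        intro w
        by_cases hw : LinearIndependent K w
        · rw [if_pos hw]
          have hspan : Fintype.card (Submodule.span K (Set.range w)) = Fintype.card K ^ k := by
            rw [← Nat.card_eq_fintype_card, my_card_V K, finrank_span_eq_card hw,
              Fintype.card_fin]
          calc Fintype.card {x : V // LinearIndependent K w ∧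
                  x ∉ Submodule.span K (Set.range w)}
              = Fintype.card {x : V // x ∉ Submodule.span K (Set.range w)} :=
                Fintype.card_congr (Equiv.subtypeEquivRight fun x =>
                  ⟨fun h => h.2, fun h => ⟨hw, h⟩⟩)
            _ = Fintype.card V - Fintype.card K ^ k := by
                rw [Fintype.card_subtype_compl, ← hspan]
            _ = Nat.card V - Fintype.card K ^ k := by rw [Nat.card_eq_fintype_card]
        · rw [if_neg hw, Fintype.card_eq_zero_iff]
          exact ⟨fun x => hw x.2.1⟩
      calc (∑ w : Fin k → V, Fintype.card {x : V // LinearIndependent K w ∧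
              x ∉ Submodule.span K (Set.range w)})
          = ∑ w : Fin k → V, if LinearIndependent K w then
              Nat.card V - Fintype.card K ^ k else 0 :=
            Finset.sum_congr rfl fun w _ => hfib w
        _ = (Finset.univ.filter fun w : Fin k → V => LinearIndependent K w).card *
              (Nat.card V - Fintype.card K ^ k) := by
            rw [← Finset.sum_filter, Finset.sum_const, smul_eq_mul]
        _ = Nat.card {v : Fin k → V // LinearIndependent K v} *
              (Nat.card V - Fintype.card K ^ k) := by
            rw [← Fintype.card_subtype,
              ← Nat.card_eq_fintype_card (α := {v : Fin k → V // LinearIndependent K v})]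

lemma card_subspaces (k : ℕ) :
    Nat.card {L : Submodule K V // Module.finrank K L = k} *
        ∏ i ∈ Finset.range k, (Fintype.card K ^ k - Fintype.card K ^ i) =
      ∏ i ∈ Finset.range k, (Nat.card V - Fintype.card K ^ i) := by
  classical
  have hVft : Fintype V := Fintype.ofFinite V
  have hMF : Module.Finite K V := Module.Finite.of_finite
  have hsubfin : Finite (Submodule K V) :=
    Finite.of_injective (fun L => (L : Set V)) SetLike.coe_injective
  set f : {v : Fin k → V // LinearIndependent K v} →
      {L : Submodule K V // Module.finrank K L = k} :=
    fun v => ⟨Submodule.span K (Set.range v.1), by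
      rw [finrank_span_eq_card v.2, Fintype.card_fin]⟩ with hf
  have e0 := (Equiv.sigmaFiberEquiv f).symm
  have efib : ∀ L : {L : Submodule K V // Module.finrank K L = k},
      {v : {v : Fin k → V // LinearIndependent K v} // f v = L} ≃
        {u : Fin k → L.1 // LinearIndependent K u} := by
    intro L
    refine ⟨fun v => ⟨fun i => ⟨v.1.1 i, ?_⟩, ?_⟩, fun u => ⟨⟨fun i => (u.1 i : V), ?_⟩, ?_⟩,
      ?_, ?_⟩
    · have : Submodule.span K (Set.range v.1.1) = L.1 := congrArg Subtype.val v.2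
      exact this ▸ Submodule.subset_span (Set.mem_range_self i)
    · have h1 : LinearIndependent K (L.1.subtype ∘ fun i => (⟨v.1.1 i, by
        have : Submodule.span K (Set.range v.1.1) = L.1 := congrArg Subtype.val v.2
        exact this ▸ Submodule.subset_span (Set.mem_range_self i)⟩ : L.1)) := by
        convert v.1.2 using 1
        rfl
      exact (LinearMap.linearIndependent_iff L.1.subtype (Submodule.ker_subtype L.1)).1 h1
    · exact u.2.map' L.1.subtype (Submodule.ker_subtype L.1)
    · apply Subtype.ext
      have hspan : Submodule.span K (Set.range u.1) = ⊤ :=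
        u.2.span_eq_top_of_card_eq_finrank' (by rw [Fintype.card_fin, L.2])
      show Submodule.span K (Set.range fun i => L.1.subtype (u.1 i)) = L.1
      have hrg : (Set.range fun i => L.1.subtype (u.1 i)) = L.1.subtype '' Set.range u.1 :=
        Set.range_comp _ _
      rw [hrg, ← Submodule.map_span, hspan, Submodule.map_subtype_top]
    · intro v; apply Subtype.ext; apply Subtype.ext; rfl
    · intro u; apply Subtype.ext; funext i; apply Subtype.ext; rfl
  have he0 := Nat.card_congr e0
  rw [card_li K V k] at he0
  have hLft : Fintype {L : Submodule K V // Module.finrank K L = k} := Fintype.ofFinite _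
  have hvft : Fintype {v : Fin k → V // LinearIndependent K v} := Fintype.ofFinite _
  have hfibcard : ∀ L : {L : Submodule K V // Module.finrank K L = k},
      Nat.card {v : {v : Fin k → V // LinearIndependent K v} // f v = L} =
        ∏ i ∈ Finset.range k, (Fintype.card K ^ k - Fintype.card K ^ i) := by
    intro L
    rw [Nat.card_congr (efib L), card_li K L.1]
    congr 1
    funext i
    congr 1
    rw [my_card_V K L.1, L.2]
  haveI instF : ∀ L : {L : Submodule K V // Module.finrank K L = k},
      Fintype {v : {v : Fin k → V // LinearIndependent K v} // f v = L} :=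
    fun L => Fintype.ofFinite _
  rw [he0, Nat.card_eq_fintype_card, Nat.card_eq_fintype_card, Fintype.card_sigma]
  simp_rw [← Nat.card_eq_fintype_card, hfibcard]
  rw [Finset.sum_const, smul_eq_mul, Finset.card_univ, ← Nat.card_eq_fintype_card]
  simp [Nat.card_eq_fintype_card]

end CountAux

set_option maxHeartbeats 1000000 in
/-- For a fixed question U with dim(F_2^U) = 3J and dim(H_U) = J, and a fixed
2ℓ-dimensional L_j, the probability over a uniform 2ℓ-dimensional L_i ⊆ F_2^U that
L_i + H_U = L_j + H_U is at most [J+2ℓ choose 2ℓ]_2 / [3J choose 2ℓ]_2, and this ratio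
of Gaussian binomial coefficients is at most 2^{−2J}, provided 0 < ℓ and 2ℓ ≤ J. -/
theorem stmt_19 (J ℓ : ℕ) (hℓ : 0 < ℓ) (h2ℓ : 2 * ℓ ≤ J)
    (H LJ : Submodule (ZMod 2) (Fin (3 * J) → ZMod 2))
    (hH : Module.finrank (ZMod 2) H = J)
    (hLJ : Module.finrank (ZMod 2) LJ = 2 * ℓ) :
    ((Nat.card {L : Submodule (ZMod 2) (Fin (3 * J) → ZMod 2) //
          Module.finrank (ZMod 2) L = 2 * ℓ ∧ L ⊔ H = LJ ⊔ H} : ℚ) /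
        (Nat.card {L : Submodule (ZMod 2) (Fin (3 * J) → ZMod 2) //
          Module.finrank (ZMod 2) L = 2 * ℓ} : ℚ)
      ≤ (∏ i ∈ Finset.range (2 * ℓ), (((2 : ℚ) ^ (J + 2 * ℓ) - 2 ^ i) / ((2 : ℚ) ^ (2 * ℓ) - 2 ^ i))) /
          (∏ i ∈ Finset.range (2 * ℓ), (((2 : ℚ) ^ (3 * J) - 2 ^ i) / ((2 : ℚ) ^ (2 * ℓ) - 2 ^ i)))) ∧
    (∏ i ∈ Finset.range (2 * ℓ), (((2 : ℚ) ^ (J + 2 * ℓ) - 2 ^ i) / ((2 : ℚ) ^ (2 * ℓ) - 2 ^ i))) /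
        (∏ i ∈ Finset.range (2 * ℓ), (((2 : ℚ) ^ (3 * J) - 2 ^ i) / ((2 : ℚ) ^ (2 * ℓ) - 2 ^ i)))
      ≤ ((2 : ℚ) ^ (2 * J))⁻¹ := by
  classical
  haveI : Fact (Nat.Prime 2) := ⟨Nat.prime_two⟩
  set V := Fin (3 * J) → ZMod 2 with hV
  set k := 2 * ℓ with hk
  have hq : Fintype.card (ZMod 2) = 2 := by simp
  have hkJ : k ≤ J := h2ℓ
  have hJ2 : 2 ≤ J := le_trans (by omega) h2ℓ
  have hcardV : Nat.card V = 2 ^ (3 * J) := by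
    rw [my_card_V (ZMod 2) V, hq, Module.finrank_fin_fun]
  -- cast helper
  have castprod : ∀ m : ℕ, k ≤ m →
      ((∏ i ∈ Finset.range k, (2 ^ m - 2 ^ i) : ℕ) : ℚ) =
        ∏ i ∈ Finset.range k, ((2 : ℚ) ^ m - 2 ^ i) := by
    intro m hm
    rw [Nat.cast_prod]
    refine Finset.prod_congr rfl fun i hi => ?_
    have hi' : i < k := Finset.mem_range.1 hi
    have hle : (2:ℕ) ^ i ≤ 2 ^ m := Nat.pow_le_pow_right (by norm_num) (by omega)
    push_cast [Nat.cast_sub hle]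
    ring
  -- positivity helpers
  have hpos : ∀ m : ℕ, k ≤ m → ∀ i ∈ Finset.range k, (0:ℚ) < (2:ℚ) ^ m - 2 ^ i := by
    intro m hm i hi
    have hi' : i < k := Finset.mem_range.1 hi
    have : (2:ℚ) ^ i < 2 ^ m := by
      apply pow_lt_pow_right₀ (by norm_num) (by omega)
    linarith
  have hPpos : (0:ℚ) < ∏ i ∈ Finset.range k, ((2:ℚ) ^ k - 2 ^ i) :=
    Finset.prod_pos (hpos k le_rfl)
  have hN3pos : (0:ℚ) < ∏ i ∈ Finset.range k, ((2:ℚ) ^ (3 * J) - 2 ^ i) :=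
    Finset.prod_pos (hpos (3 * J) (by omega))
  have hNApos : (0:ℚ) < ∏ i ∈ Finset.range k, ((2:ℚ) ^ (J + k) - 2 ^ i) :=
    Finset.prod_pos (hpos (J + k) (by omega))
  -- denominator count
  have hden : (Nat.card {L : Submodule (ZMod 2) V // Module.finrank (ZMod 2) L = k} : ℚ) *
      ∏ i ∈ Finset.range k, ((2:ℚ) ^ k - 2 ^ i) =
        ∏ i ∈ Finset.range k, ((2:ℚ) ^ (3 * J) - 2 ^ i) := by
    have h := card_subspaces (ZMod 2) V k
    rw [hq, hcardV] at h
    have := congrArg (fun n : ℕ => (n : ℚ)) h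
    simpa [Nat.cast_mul, castprod k le_rfl, castprod (3 * J) (by omega)] using this
  -- numerator bound
  set W := LJ ⊔ H with hW
  haveI : Module.Finite (ZMod 2) V := Module.Finite.of_finite
  have hWrank : Module.finrank (ZMod 2) W ≤ J + k := by
    have h := Submodule.finrank_sup_add_finrank_inf_eq LJ H
    rw [hLJ, hH, ← hW] at h
    omega
  haveI hsubWfin : Finite (Submodule (ZMod 2) W) :=
    Finite.of_injective (fun L => (L : Set W)) SetLike.coe_injective
  have hinj : Nat.card {L : Submodule (ZMod 2) V //
        Module.finrank (ZMod 2) L = k ∧ L ⊔ H = LJ ⊔ H} ≤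
      Nat.card {L' : Submodule (ZMod 2) W // Module.finrank (ZMod 2) L' = k} := by
    have hle : ∀ L : {L : Submodule (ZMod 2) V //
        Module.finrank (ZMod 2) L = k ∧ L ⊔ H = LJ ⊔ H}, L.1 ≤ W := by
      intro L
      exact le_trans le_sup_left (le_of_eq L.2.2)
    refine Nat.card_le_card_of_injective (fun L =>
      ⟨(Submodule.MapSubtype.orderIso W).symm ⟨L.1, hle L⟩, ?_⟩) ?_
    · have hmap : Submodule.map W.subtype
          ((Submodule.MapSubtype.orderIso W).symm ⟨L.1, hle L⟩) = L.1 := by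
        have := (Submodule.MapSubtype.orderIso W).apply_symm_apply ⟨L.1, hle L⟩
        exact congrArg Subtype.val this
      have := Submodule.finrank_map_subtype_eq W
        ((Submodule.MapSubtype.orderIso W).symm ⟨L.1, hle L⟩)
      rw [hmap] at this
      rw [← this, L.2.1]
    · intro L1 L2 h12
      have h12' := congrArg Subtype.val h12
      have := congrArg (Submodule.MapSubtype.orderIso W) h12'
      rw [(Submodule.MapSubtype.orderIso W).apply_symm_apply,
        (Submodule.MapSubtype.orderIso W).apply_symm_apply] at this
      exact Subtype.ext (Subtype.mk_eq_mk.1 this)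
  have hnumW : Nat.card {L' : Submodule (ZMod 2) W // Module.finrank (ZMod 2) L' = k} *
      ∏ i ∈ Finset.range k, (2 ^ k - 2 ^ i) =
        ∏ i ∈ Finset.range k, (Nat.card W - 2 ^ i) := by
    have h := card_subspaces (ZMod 2) W k
    rwa [hq] at h
  have hcardW : Nat.card W ≤ 2 ^ (J + k) := by
    rw [my_card_V (ZMod 2) W, hq]
    exact Nat.pow_le_pow_right (by norm_num) hWrank
  have hnumN : (Nat.card {L : Submodule (ZMod 2) V //
        Module.finrank (ZMod 2) L = k ∧ L ⊔ H = LJ ⊔ H} : ℚ) *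
      ∏ i ∈ Finset.range k, ((2:ℚ) ^ k - 2 ^ i) ≤
        ∏ i ∈ Finset.range k, ((2:ℚ) ^ (J + k) - 2 ^ i) := by
    have h1 : Nat.card {L : Submodule (ZMod 2) V //
          Module.finrank (ZMod 2) L = k ∧ L ⊔ H = LJ ⊔ H} *
        ∏ i ∈ Finset.range k, (2 ^ k - 2 ^ i) ≤
          ∏ i ∈ Finset.range k, (2 ^ (J + k) - 2 ^ i) := by
      calc _ ≤ Nat.card {L' : Submodule (ZMod 2) W // Module.finrank (ZMod 2) L' = k} *
            ∏ i ∈ Finset.range k, (2 ^ k - 2 ^ i) := Nat.mul_le_mul_right _ hinj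
        _ = ∏ i ∈ Finset.range k, (Nat.card W - 2 ^ i) := hnumW
        _ ≤ ∏ i ∈ Finset.range k, (2 ^ (J + k) - 2 ^ i) :=
            Finset.prod_le_prod' fun i _ => Nat.sub_le_sub_right hcardW _
    have h2 : ((Nat.card {L : Submodule (ZMod 2) V //
          Module.finrank (ZMod 2) L = k ∧ L ⊔ H = LJ ⊔ H} *
        ∏ i ∈ Finset.range k, (2 ^ k - 2 ^ i) : ℕ) : ℚ) ≤
          ((∏ i ∈ Finset.range k, (2 ^ (J + k) - 2 ^ i) : ℕ) : ℚ) := Nat.cast_le.2 h1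
    rwa [Nat.cast_mul, castprod k le_rfl, castprod (J + k) (by omega)] at h2
  constructor
  · -- part 1
    rw [Finset.prod_div_distrib, Finset.prod_div_distrib]
    have hD : (Nat.card {L : Submodule (ZMod 2) V //
          Module.finrank (ZMod 2) L = k} : ℚ) =
        (∏ i ∈ Finset.range k, ((2:ℚ) ^ (3 * J) - 2 ^ i)) /
          (∏ i ∈ Finset.range k, ((2:ℚ) ^ k - 2 ^ i)) :=
      (eq_div_iff hPpos.ne').2 hden
    have hN : (Nat.card {L : Submodule (ZMod 2) V //
          Module.finrank (ZMod 2) L = k ∧ L ⊔ H = LJ ⊔ H} : ℚ) ≤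
        (∏ i ∈ Finset.range k, ((2:ℚ) ^ (J + k) - 2 ^ i)) /
          (∏ i ∈ Finset.range k, ((2:ℚ) ^ k - 2 ^ i)) :=
      (le_div_iff₀ hPpos).2 hnumN
    rw [hD]
    have hc : (0:ℚ) < (∏ i ∈ Finset.range k, ((2:ℚ) ^ (3 * J) - 2 ^ i)) /
        (∏ i ∈ Finset.range k, ((2:ℚ) ^ k - 2 ^ i)) := div_pos hN3pos hPpos
    exact (div_le_div_iff_of_pos_right hc).2 hN
  · -- part 2
    rw [Finset.prod_div_distrib, Finset.prod_div_distrib]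
    set a := ∏ i ∈ Finset.range k, ((2:ℚ) ^ (J + k) - 2 ^ i) with ha
    set b := ∏ i ∈ Finset.range k, ((2:ℚ) ^ (3 * J) - 2 ^ i) with hb
    set p := ∏ i ∈ Finset.range k, ((2:ℚ) ^ k - 2 ^ i) with hp
    have heq : (a / p) / (b / p) = a / b := by
      field_simp
    rw [heq, div_le_iff₀ hN3pos]
    have key : a * 2 ^ (2 * J) ≤ b := by
      have hfac : ∀ i ∈ Finset.range k,
          ((2:ℚ) ^ (J + k) - 2 ^ i) * 2 ^ (3 * J) ≤
            ((2:ℚ) ^ (3 * J) - 2 ^ i) * 2 ^ (J + k) := by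
        intro i hi
        have h2 : (2:ℚ) ^ (J + k) ≤ 2 ^ (3 * J) :=
          pow_le_pow_right₀ one_le_two (by omega)
        have h3 : (0:ℚ) < 2 ^ i := pow_pos two_pos i
        nlinarith
      have hprod : a * ((2:ℚ) ^ (3 * J)) ^ k ≤ b * ((2:ℚ) ^ (J + k)) ^ k := by
        have h0 := Finset.prod_le_prod (s := Finset.range k)
          (f := fun i => ((2:ℚ) ^ (J + k) - 2 ^ i) * 2 ^ (3 * J))
          (g := fun i => ((2:ℚ) ^ (3 * J) - 2 ^ i) * 2 ^ (J + k))
          (fun i hi => mul_nonneg (hpos (J + k) (by omega) i hi).le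
            (pow_pos two_pos _).le) hfac
        rwa [Finset.prod_mul_distrib, Finset.prod_mul_distrib, Finset.prod_const,
          Finset.prod_const, Finset.card_range] at h0
      have hexp : ((2:ℚ) ^ (J + k)) ^ k * 2 ^ (2 * J) ≤ ((2:ℚ) ^ (3 * J)) ^ k := by
        rw [← pow_mul, ← pow_mul, ← pow_add]
        apply pow_le_pow_right₀ one_le_two
        have hk2 : 2 ≤ k := by omega
        nlinarith [Nat.mul_le_mul_right k hkJ, Nat.mul_le_mul_left J hk2]
      have h4 := mul_le_mul_of_nonneg_right hprod (le_of_lt (pow_pos two_pos (2 * J)))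
      have h5 : b * (((2:ℚ) ^ (J + k)) ^ k * 2 ^ (2 * J)) ≤ b * ((2:ℚ) ^ (3 * J)) ^ k :=
        mul_le_mul_of_nonneg_left hexp hN3pos.le
      have h6 : (a * 2 ^ (2 * J)) * ((2:ℚ) ^ (3 * J)) ^ k ≤ b * ((2:ℚ) ^ (3 * J)) ^ k := by
        nlinarith [h4, h5]
      exact le_of_mul_le_mul_right h6 (pow_pos (pow_pos two_pos _) k)
    calc a ≤ b / 2 ^ (2 * J) := (le_div_iff₀ (pow_pos two_pos _)).2 key
      _ = ((2:ℚ) ^ (2 * J))⁻¹ * b := by rw [div_eq_inv_mul]
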